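/- Twisting the coordinate algebra A[R^4] (generated by zeta_1, zeta_2 and conjugates) by the translation cocycle F yields the Moyal relations [zeta_1^*, zeta_1] = i hbar alpha, [zeta_2^*, zeta_2] = -i hbar beta, with all other commutators between generators equal to zero. -/
import Mathlib


open TensorProduct LinearMap

noncomputable section

variable (H : Type) [CommRing H] [Bialgebra ℂ H] [StarRing H] [StarModule ℂ H]
variable (A : Type) [CommRing A] [StarRing A] [Algebra ℂ A] [StarModule ℂ A]

/-- The cocycle-twisted product `a •_F b := F(a₍₋₁₎, b₍₋₁₎) a₍₀₎ b₍₀₎` on an `H`-comodule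
algebra `A` with coaction `ρ`. -/
def twistedComodMul (F : (H ⊗[ℂ] H) →ₗ[ℂ] ℂ) (ρ : A →ₗ[ℂ] H ⊗[ℂ] A) :
    (A ⊗[ℂ] A) →ₗ[ℂ] A :=
  (TensorProduct.lid ℂ A).toLinearMap ∘ₗ
    TensorProduct.map F (LinearMap.mul' ℂ A) ∘ₗ
    (TensorProduct.tensorTensorTensorComm ℂ H A H A).toLinearMap ∘ₗ
    TensorProduct.map ρ ρ

lemma twistedComodMul_gen (F : (H ⊗[ℂ] H) →ₗ[ℂ] ℂ) (ρ : A →ₗ[ℂ] H ⊗[ℂ] A)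
    (a b : A) (s t : H)
    (ha : ρ a = (1 : H) ⊗ₜ[ℂ] a + s ⊗ₜ[ℂ] (1 : A))
    (hb : ρ b = (1 : H) ⊗ₜ[ℂ] b + t ⊗ₜ[ℂ] (1 : A))
    (hFunit : ∀ h : H, F ((1 : H) ⊗ₜ[ℂ] h) = Coalgebra.counit h ∧
                        F (h ⊗ₜ[ℂ] (1 : H)) = Coalgebra.counit h)
    (hs : Coalgebra.counit (R := ℂ) s = 0) (ht : Coalgebra.counit (R := ℂ) t = 0) :
    twistedComodMul H A F ρ (a ⊗ₜ[ℂ] b) = a * b + F (s ⊗ₜ[ℂ] t) • (1 : A) := by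
  simp only [twistedComodMul, LinearMap.comp_apply, TensorProduct.map_tmul, ha, hb,
    TensorProduct.tmul_add, TensorProduct.add_tmul, map_add,
    TensorProduct.tensorTensorTensorComm_tmul, LinearEquiv.coe_coe,
    LinearMap.mul'_apply, TensorProduct.lid_tmul]
  rw [show F ((1:H) ⊗ₜ[ℂ] t) = 0 from (hFunit t).1.trans ht,
    show F (s ⊗ₜ[ℂ] (1:H)) = 0 from (hFunit s).2.trans hs,
    show F ((1:H) ⊗ₜ[ℂ] (1:H)) = 1 from (hFunit 1).1.trans Bialgebra.counit_one]
  simp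

/-- Twisting the coordinate algebra `A[ℝ⁴]` (generators `ζ₁, ζ₂` and
conjugates, with coaction `ζⱼ ↦ 1 ⊗ ζⱼ + tⱼ ⊗ 1` of `H = ℂ[t₁, t₁^*, t₂, t₂^*]`) by the
translation (Moyal) cocycle `F` yields the Moyal relations
`[ζ₁^*, ζ₁] = iℏα`, `[ζ₂^*, ζ₂] = -iℏβ`, with all other commutators between generators
equal to zero. -/
theorem stmt14 (ℏ α β : ℝ) (hℏ : 0 < ℏ) (hα : α ≠ 0) (hβ : β ≠ 0)
    (t₁ t₂ : H) (ζ₁ ζ₂ : A)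
    (T : Fin 4 → H) (hT : T = ![t₁, star t₁, t₂, star t₂])
    (ρ : A →ₗ[ℂ] H ⊗[ℂ] A)
    -- the coaction on the generators and their conjugates
    (hρ1 : ρ ζ₁ = (1 : H) ⊗ₜ[ℂ] ζ₁ + t₁ ⊗ₜ[ℂ] (1 : A))
    (hρ2 : ρ ζ₂ = (1 : H) ⊗ₜ[ℂ] ζ₂ + t₂ ⊗ₜ[ℂ] (1 : A))
    (hρ1s : ρ (star ζ₁) = (1 : H) ⊗ₜ[ℂ] star ζ₁ + star t₁ ⊗ₜ[ℂ] (1 : A))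
    (hρ2s : ρ (star ζ₂) = (1 : H) ⊗ₜ[ℂ] star ζ₂ + star t₂ ⊗ₜ[ℂ] (1 : A))
    -- the values of the Moyal twisting cocycle
    (F : (H ⊗[ℂ] H) →ₗ[ℂ] ℂ)
    (hFunit : ∀ h : H, F ((1 : H) ⊗ₜ[ℂ] h) = Coalgebra.counit h ∧
                        F (h ⊗ₜ[ℂ] (1 : H)) = Coalgebra.counit h)
    (hcounitT : ∀ i, Coalgebra.counit (R := ℂ) (T i) = 0)
    (hF1 : F (star t₁ ⊗ₜ[ℂ] t₁) = Complex.I * ℏ * α / 2)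
    (hF1' : F (t₁ ⊗ₜ[ℂ] star t₁) = -(Complex.I * ℏ * α / 2))
    (hF2 : F (star t₂ ⊗ₜ[ℂ] t₂) = -(Complex.I * ℏ * β / 2))
    (hF2' : F (t₂ ⊗ₜ[ℂ] star t₂) = Complex.I * ℏ * β / 2)
    (hF0 : ∀ i j : Fin 4, ¬(i = 1 ∧ j = 0) → ¬(i = 0 ∧ j = 1) →
            ¬(i = 3 ∧ j = 2) → ¬(i = 2 ∧ j = 3) → F (T i ⊗ₜ[ℂ] T j) = 0)
    (w : Fin 4 → A) (hw : w = ![ζ₁, ζ₂, star ζ₁, star ζ₂]) :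
    -- the Moyal commutation relations
    (twistedComodMul H A F ρ (star ζ₁ ⊗ₜ[ℂ] ζ₁) -
        twistedComodMul H A F ρ (ζ₁ ⊗ₜ[ℂ] star ζ₁) =
      (Complex.I * ℏ * α) • (1 : A)) ∧
    (twistedComodMul H A F ρ (star ζ₂ ⊗ₜ[ℂ] ζ₂) -
        twistedComodMul H A F ρ (ζ₂ ⊗ₜ[ℂ] star ζ₂) =
      -((Complex.I * ℏ * β) • (1 : A))) ∧
    -- all other pairs of generators commute
    (∀ p q : Fin 4,
      ¬((p = 0 ∧ q = 2) ∨ (q = 0 ∧ p = 2) ∨ (p = 1 ∧ q = 3) ∨ (q = 1 ∧ p = 3)) →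
      twistedComodMul H A F ρ (w p ⊗ₜ[ℂ] w q) =
        twistedComodMul H A F ρ (w q ⊗ₜ[ℂ] w p)) := by
  have ε1 : Coalgebra.counit (R := ℂ) t₁ = 0 := by have := hcounitT 0; simpa [hT] using this
  have ε1s : Coalgebra.counit (R := ℂ) (star t₁) = 0 := by
    have := hcounitT 1; simpa [hT] using this
  have ε2 : Coalgebra.counit (R := ℂ) t₂ = 0 := by have := hcounitT 2; simpa [hT] using this
  have ε2s : Coalgebra.counit (R := ℂ) (star t₂) = 0 := by
    have := hcounitT 3; simpa [hT] using this
  refine ⟨?_, ?_, ?_⟩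
  · rw [twistedComodMul_gen H A F ρ _ _ _ _ hρ1s hρ1 hFunit ε1s ε1,
      twistedComodMul_gen H A F ρ _ _ _ _ hρ1 hρ1s hFunit ε1 ε1s, hF1, hF1']
    rw [mul_comm, add_sub_add_left_eq_sub, ← sub_smul]
    congr 1
    ring
  · rw [twistedComodMul_gen H A F ρ _ _ _ _ hρ2s hρ2 hFunit ε2s ε2,
      twistedComodMul_gen H A F ρ _ _ _ _ hρ2 hρ2s hFunit ε2 ε2s, hF2, hF2']
    rw [mul_comm, add_sub_add_left_eq_sub, ← sub_smul, ← neg_smul]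
    congr 1
    ring
  · intro p q hpq
    -- map from w-index to T-index and to the corresponding H element
    have hρw : ∀ p : Fin 4, ρ (w p) = (1 : H) ⊗ₜ[ℂ] (w p) + (T (![0,2,1,3] p)) ⊗ₜ[ℂ] (1 : A) := by
      intro p
      fin_cases p <;> simp [hw, hT, hρ1, hρ2, hρ1s, hρ2s]
    have εw : ∀ p : Fin 4, Coalgebra.counit (R := ℂ) (T (![0,2,1,3] p)) = 0 := by
      intro p; exact hcounitT _
    have hσ : ∀ p q : Fin 4,
        ¬((p = 0 ∧ q = 2) ∨ (q = 0 ∧ p = 2) ∨ (p = 1 ∧ q = 3) ∨ (q = 1 ∧ p = 3)) →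
        F (T (![0,2,1,3] p) ⊗ₜ[ℂ] T (![0,2,1,3] q)) = 0 := by
      clear hpq
      intro p q h
      fin_cases p <;> fin_cases q <;>
        first
        | exact (h (by decide)).elim
        | exact hF0 _ _ (by decide) (by decide) (by decide) (by decide)
    rw [twistedComodMul_gen H A F ρ _ _ _ _ (hρw p) (hρw q) hFunit (εw p) (εw q),
      twistedComodMul_gen H A F ρ _ _ _ _ (hρw q) (hρw p) hFunit (εw q) (εw p),
      hσ p q hpq, hσ q p (by tauto), mul_comm]
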